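/- arXiv:2204.14196 — 2 statements merged into one kernel-verified Lean document; each statement's English description precedes it below -/
import Mathlib

section
/- Let d be a nonzero integer with gcd(d,6) = 1 and let ω ∈ {−1, 1}. Then every triple (a,b,c) ∈ ℤ³ with b² − 4ac = d², 6 | a, and b ≡ ω|d| (mod 12) is Γ₀(6)-equivalent to exactly one form (0, ω|d|, c₀) with 0 ≤ c₀ < |d|. In particular, the |d| forms (0, ω|d|, c₀) for 0 ≤ c₀ < |d| are pairwise Γ₀(6)-inequivalent. -/
/-!
Put `e = ω|d|`, so that the discriminant is `e²`. Then `Q` vanishes at `(b + e, -2a)`; dividing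
by `g = gcd(b + e, 2a)` gives a primitive zero `(m, -n)`, and any `γ ∈ SL₂(ℤ)` with bottom row
`(n, m)` kills the first coefficient of `γQ`. Since `b + e ≡ 2e (mod 12)` is divisible by neither
`3` nor `4` while `12 ∣ 2a`, the entry `n = 2a/g` is still divisible by `6`, so `γ ∈ Γ₀(6)`.
The middle coefficient of `γQ` is then `±e` and `≡ b (mod 12)`, hence equal to `e`. Finally, a
matrix of `SL₂(ℤ)` carrying `(0, e, c)` to `(0, e, c')` is upper triangular with diagonal `±1`,
so exactly the shifts `c' ≡ c (mod e)` occur.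
-/

/-- The action of `γ = [[A,B],[C,D]] ∈ SL₂(ℤ)` on an integral binary quadratic form
`(a,b,c)`, given by `(γQ)(x,y) = Q(Dx - By, -Cx + Ay)`. -/
def actQF (γ : Matrix.SpecialLinearGroup (Fin 2) ℤ) (Q : ℤ × ℤ × ℤ) : ℤ × ℤ × ℤ :=
  let A := γ.1 0 0; let B := γ.1 0 1; let C := γ.1 1 0; let D := γ.1 1 1
  let a := Q.1; let b := Q.2.1; let c := Q.2.2
  (a * D ^ 2 - b * C * D + c * C ^ 2,
   -2 * a * B * D + b * (A * D + B * C) - 2 * c * A * C,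
   a * B ^ 2 - b * A * B + c * A ^ 2)

/-- Two integral binary quadratic forms are `Γ₀(6)`-equivalent if one is obtained from the
other by the action of a matrix in `SL₂(ℤ)` whose lower-left entry is divisible by `6`. -/
def EquivQF (Q Q' : ℤ × ℤ × ℤ) : Prop :=
  ∃ γ : Matrix.SpecialLinearGroup (Fin 2) ℤ, 6 ∣ γ.1 1 0 ∧ actQF γ Q = Q'

open CongruenceSubgroup
open scoped MatrixGroups

lemma Matrix.SpecialLinearGroup.det_fin_two_eq_one {R : Type*} [CommRing R] (γ : SL(2, R)) :
    γ.1 0 0 * γ.1 1 1 - γ.1 0 1 * γ.1 1 0 = 1 := by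
  have h := γ.2
  rwa [Matrix.det_fin_two] at h

lemma actQF_one (Q : ℤ × ℤ × ℤ) : actQF 1 Q = Q := by
  simp [actQF]

lemma actQF_mul (γ δ : SL(2, ℤ)) (Q : ℤ × ℤ × ℤ) :
    actQF (γ * δ) Q = actQF γ (actQF δ Q) := by
  simp only [actQF, Matrix.SpecialLinearGroup.coe_mul, Matrix.mul_apply, Fin.sum_univ_two]
  refine Prod.ext ?_ (Prod.ext ?_ ?_) <;> ring

lemma disc_actQF (γ : SL(2, ℤ)) (Q : ℤ × ℤ × ℤ) :
    (actQF γ Q).2.1 ^ 2 - 4 * (actQF γ Q).1 * (actQF γ Q).2.2 = Q.2.1 ^ 2 - 4 * Q.1 * Q.2.2 := by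
  have hdet := Matrix.SpecialLinearGroup.det_fin_two_eq_one γ
  simp only [actQF]
  linear_combination (Q.2.1 ^ 2 - 4 * Q.1 * Q.2.2) *
    (γ.1 0 0 * γ.1 1 1 - γ.1 0 1 * γ.1 1 0 + 1) * hdet

lemma actQF_snd_modEq {N : ℤ} (γ : SL(2, ℤ)) {a b c : ℤ} (ha : N ∣ a) (hC : N ∣ γ.1 1 0) :
    (actQF γ (a, b, c)).2.1 ≡ b [ZMOD 2 * N] := by
  obtain ⟨a', rfl⟩ := ha
  obtain ⟨C', hC'⟩ := hC
  have hdet := Matrix.SpecialLinearGroup.det_fin_two_eq_one γ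
  refine (Int.modEq_iff_dvd.mpr ⟨-a' * γ.1 0 1 * γ.1 1 1 + b * γ.1 0 1 * C' -
    c * γ.1 0 0 * C', ?_⟩).symm
  simp only [actQF]
  linear_combination (2 * b * γ.1 0 1 - 2 * c * γ.1 0 0) * hC' + b * hdet

lemma equivQF_iff_exists_mem_Gamma0 (Q Q' : ℤ × ℤ × ℤ) :
    EquivQF Q Q' ↔ ∃ γ ∈ Gamma0 6, actQF γ Q = Q' := by
  simp only [EquivQF, Gamma0_mem, ZMod.intCast_zmod_eq_zero_iff_dvd, Nat.cast_ofNat]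

lemma EquivQF.symm {Q Q' : ℤ × ℤ × ℤ} (h : EquivQF Q Q') : EquivQF Q' Q := by
  rw [equivQF_iff_exists_mem_Gamma0] at h ⊢
  obtain ⟨γ, hγ, rfl⟩ := h
  exact ⟨γ⁻¹, inv_mem hγ, by rw [← actQF_mul, inv_mul_cancel, actQF_one]⟩

lemma EquivQF.trans {Q Q' Q'' : ℤ × ℤ × ℤ} (h : EquivQF Q Q') (h' : EquivQF Q' Q'') :
    EquivQF Q Q'' := by
  rw [equivQF_iff_exists_mem_Gamma0] at h h' ⊢
  obtain ⟨γ, hγ, rfl⟩ := h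
  obtain ⟨δ, hδ, rfl⟩ := h'
  exact ⟨δ * γ, mul_mem hδ hγ, actQF_mul δ γ Q⟩

lemma dvd_sub_of_actQF_eq {e c c' : ℤ} (he : e ≠ 0) (γ : SL(2, ℤ))
    (h : actQF γ (0, e, c) = (0, e, c')) : e ∣ c' - c := by
  have hdet := Matrix.SpecialLinearGroup.det_fin_two_eq_one γ
  simp only [actQF, Prod.mk.injEq] at h
  obtain ⟨h₁, h₂, h₃⟩ := h
  have hC : γ.1 1 0 = 0 := by
    by_contra hC
    have hcC : c * γ.1 1 0 = e * γ.1 1 1 :=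
      mul_left_cancel₀ hC (by linear_combination h₁)
    have h2e : 2 * e = 0 := by linear_combination -h₂ - 2 * γ.1 0 0 * hcC - e * hdet
    omega
  have hA : γ.1 0 0 ^ 2 = 1 := by
    rcases Int.eq_one_or_neg_one_of_mul_eq_one (u := γ.1 0 0) (v := γ.1 1 1)
      (by linear_combination hdet + γ.1 0 1 * hC) with h | h <;> simp [h]
  exact ⟨-(γ.1 0 0 * γ.1 0 1), by linear_combination h₃.symm + c * hA⟩

lemma equivQF_zero_iff {e c c' : ℤ} (he : e ≠ 0) :
    EquivQF (0, e, c) (0, e, c') ↔ e ∣ c' - c := by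
  refine ⟨fun ⟨γ, _, hγ⟩ => dvd_sub_of_actQF_eq he γ hγ, fun ⟨k, hk⟩ => ?_⟩
  let τ : SL(2, ℤ) := ⟨!![1, -k; 0, 1], by simp [Matrix.det_fin_two_of]⟩
  refine ⟨τ, by simp [τ], ?_⟩
  simp only [actQF, τ, Matrix.of_apply, Matrix.cons_val', Matrix.cons_val_zero,
    Matrix.cons_val_one, Matrix.empty_val', Matrix.cons_val_fin_one, Prod.mk.injEq]
  refine ⟨by ring, by ring, by linear_combination -hk⟩

lemma six_dvd_of_twelve_dvd_mul {g x : ℤ} (h : 12 ∣ g * x) (h₃ : ¬ 3 ∣ g) (h₄ : ¬ 4 ∣ g) :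
    6 ∣ x := by
  have h3x : 3 ∣ x := (Int.prime_three.dvd_mul.mp (dvd_trans (by norm_num) h)).resolve_left h₃
  have h2x : 2 ∣ x := by
    by_contra h2x
    have h4 : 2 ^ 2 ∣ g * x := dvd_trans (by norm_num) h
    exact h₄ (by simpa using Int.prime_two.pow_dvd_of_dvd_mul_right 2 h2x h4)
  omega

lemma exists_equivQF_fst_eq_zero {a b c e : ℤ} (hdisc : b ^ 2 - 4 * a * c = e ^ 2)
    (ha : 6 ∣ a) (h₃ : ¬ 3 ∣ b + e) (h₄ : ¬ 4 ∣ b + e) :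
    ∃ Q, EquivQF (a, b, c) Q ∧ Q.1 = 0 := by
  have hg : 0 < Int.gcd (b + e) (2 * a) :=
    Int.gcd_pos_iff.mpr (Or.inl fun h => h₄ (h ▸ dvd_zero 4))
  obtain ⟨m, n, hmn, hm, hn⟩ := Int.exists_gcd_one hg
  set g : ℤ := (Int.gcd (b + e) (2 * a) : ℤ)
  obtain ⟨γ, -, hγ⟩ := ModularGroup.bottom_row_surj (R := ℤ) (a := ![n, m])
    (Int.isCoprime_iff_gcd_eq_one.mpr hmn).symm
  have hC : γ.1 1 0 = n := congrFun hγ 0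
  have hD : γ.1 1 1 = m := congrFun hγ 1
  refine ⟨_, ⟨γ, hC ▸ six_dvd_of_twelve_dvd_mul (g := g) ?_ ?_ ?_, rfl⟩, ?_⟩
  · rw [mul_comm, ← hn]; omega
  · exact fun h => h₃ (hm ▸ dvd_mul_of_dvd_right h m)
  · exact fun h => h₄ (hm ▸ dvd_mul_of_dvd_right h m)
  · have hroot : a * (m * g) ^ 2 - b * (n * g) * (m * g) + c * (n * g) ^ 2 = 0 := by
      rw [← hm, ← hn]; linear_combination -a * hdisc
    have hg0 : g ^ 2 ≠ 0 := pow_ne_zero 2 (Int.natCast_pos.mpr hg).ne'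
    simp only [actQF, hC, hD]
    exact (mul_eq_zero.mp (by linear_combination hroot)).resolve_left hg0

lemma exists_equivQF_zero_of_modEq {a b c e : ℤ} (hdisc : b ^ 2 - 4 * a * c = e ^ 2)
    (ha : 6 ∣ a) (hb : b ≡ e [ZMOD 12]) (h₂ : ¬ 2 ∣ e) (h₃ : ¬ 3 ∣ e) :
    ∃ c', EquivQF (a, b, c) (0, e, c') := by
  have h12 := hb.dvd
  obtain ⟨_, ⟨γ, hγ6, rfl⟩, hγ0⟩ := exists_equivQF_fst_eq_zero hdisc ha (by omega) (by omega)
  have hb' : (actQF γ (a, b, c)).2.1 ≡ e [ZMOD 12] := (actQF_snd_modEq γ ha hγ6).trans hb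
  have hsq : (actQF γ (a, b, c)).2.1 ^ 2 = e ^ 2 := by
    linear_combination disc_actQF γ (a, b, c) + hdisc + 4 * (actQF γ (a, b, c)).2.2 * hγ0
  have hb'e : (actQF γ (a, b, c)).2.1 = e := by
    have := hb'.dvd
    rcases sq_eq_sq_iff_eq_or_eq_neg.mp hsq with h | h
    · exact h
    · omega
  exact ⟨_, γ, hγ6, Prod.ext hγ0 (Prod.ext hb'e rfl)⟩

lemma Int.existsUnique_nonneg_lt_abs_dvd_sub (x : ℤ) {n : ℤ} (hn : n ≠ 0) :
    ∃! r : ℤ, 0 ≤ r ∧ r < |n| ∧ n ∣ r - x := by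
  have hn' : 0 < |n| := abs_pos.mpr hn
  refine ⟨x % |n|, ⟨Int.emod_nonneg _ hn'.ne', Int.emod_lt_of_pos _ hn', ?_⟩, ?_⟩
  · exact (abs_dvd _ _).mp ⟨-(x / |n|), by rw [Int.emod_def]; ring⟩
  · rintro r ⟨hr0, hrn, hdvd⟩
    have hmod : x ≡ r [ZMOD |n|] := Int.modEq_iff_dvd.mpr ((abs_dvd _ _).mpr hdvd)
    exact (Int.emod_eq_of_lt hr0 hrn).symm.trans hmod.symm

theorem square_disc_representatives_general (d : ℤ) (hd6 : Int.gcd d 6 = 1)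
    (ω : ℤ) (hω : ω = -1 ∨ ω = 1) (a b c : ℤ)
    (hdisc : b ^ 2 - 4 * a * c = d ^ 2) (ha : 6 ∣ a)
    (hb : b ≡ ω * |d| [ZMOD 12]) :
    ∃! c₀ : ℤ, 0 ≤ c₀ ∧ c₀ < |d| ∧ EquivQF (a, b, c) (0, ω * |d|, c₀) := by
  set e := ω * |d|
  have hnat : e.natAbs = d.natAbs := by rcases hω with rfl | rfl <;> simp [e, Int.natAbs_abs]
  have habs : |e| = |d| := by simp only [Int.abs_eq_natAbs, hnat]
  have hcop : IsCoprime e 6 := Int.isCoprime_iff_gcd_eq_one.mpr (by rwa [Int.gcd, hnat])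
  have h₂ : ¬ 2 ∣ e := fun h => by simpa [Int.isUnit_iff] using hcop.isUnit_of_dvd' h (by norm_num)
  have h₃ : ¬ 3 ∣ e := fun h => by simpa [Int.isUnit_iff] using hcop.isUnit_of_dvd' h (by norm_num)
  have he0 : e ≠ 0 := fun h => h₂ (h ▸ dvd_zero 2)
  have hsq : d ^ 2 = e ^ 2 := by rw [← sq_abs, ← habs, sq_abs]
  obtain ⟨c', hc'⟩ := exists_equivQF_zero_of_modEq (hdisc.trans hsq) ha hb h₂ h₃
  have hequiv (c₀ : ℤ) : EquivQF (a, b, c) (0, e, c₀) ↔ e ∣ c₀ - c' :=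
    ⟨fun h => (equivQF_zero_iff he0).mp (hc'.symm.trans h),
      fun h => hc'.trans ((equivQF_zero_iff he0).mpr h)⟩
  simpa only [hequiv, habs] using Int.existsUnique_nonneg_lt_abs_dvd_sub c' he0

theorem square_disc_representatives (d : ℤ) (hd : d ≠ 0) (hd6 : Int.gcd d 6 = 1)
    (ω : ℤ) (hω : ω = -1 ∨ ω = 1) (a b c : ℤ)
    (hdisc : b ^ 2 - 4 * a * c = d ^ 2) (ha : 6 ∣ a)
    (hb : b ≡ ω * |d| [ZMOD 12]) :
    ∃! c₀ : ℤ, 0 ≤ c₀ ∧ c₀ < |d| ∧ EquivQF (a, b, c) (0, ω * |d|, c₀) :=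
  square_disc_representatives_general d hd6 ω hω a b c hdisc ha hb
end

section
/- Let D ≡ 1 (mod 24) be a positive integer with a factorization D = d·d' where d, d' ≡ 1 (mod 24) are negative and d is squarefree, and let χ_d be a genus character for this factorization. Then for every integer c ≥ 1, ∑_b (12/b) · χ_d(6c, b, (b²−D)/(24c)) = 0, where the sum runs over the integers b with 0 ≤ b < 12c and b² ≡ D (mod 24c). -/
/-- The Kronecker symbol `(12/b)`. -/
def kron12 (b : ℤ) : ℤ :=
  if b % 12 = 1 ∨ b % 12 = 11 then 1 else if b % 12 = 5 ∨ b % 12 = 7 then -1 else 0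

/-- The Kronecker symbol `(d/m)` for `d ≡ 1 (mod 8)` and `m ≥ 1`: the Jacobi symbol of `d`
at the odd part of `m`. -/
def kron (d : ℤ) (m : ℕ) : ℤ := jacobiSym d (m / 2 ^ m.factorization 2)

/-!
Choose `u` with `u² ≡ 1 (mod 24c)` and `u ≡ 7 (mod 12)`. Then `b ↦ u b mod 12c` is an
involution of the summation range which preserves `b² mod 24c` and flips the sign of `(12/b)`.

Put `g = gcd(d, c)` and `h = |d| / g`; as `d` is squarefree and prime to 6, `g ∣ b` and
`gcd(12c, h) = 1`. Evaluating `χ_d` at a value `m = 6c x² + b x + ℓ` with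
`12c x + b ≡ 1 (mod h)`, quadratic reciprocity gives `χ_d(6c, b, ℓ) = (ℓ/g) (24c/h)`.
The involution changes `ℓ` only modulo `g`, so the terms of the sum cancel in pairs.
-/

open scoped NumberTheorySymbols

theorem Finset.sum_eq_zero_of_involution_neg {ι G : Type*} [AddCommGroup G]
    [IsAddTorsionFree G] {s : Finset ι} {f : ι → G} (σ : ι → ι) (hσ : ∀ a ∈ s, σ a ∈ s)
    (hσσ : ∀ a ∈ s, σ (σ a) = a) (hf : ∀ a ∈ s, f (σ a) = -f a) : ∑ a ∈ s, f a = 0 :=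
  Finset.sum_involution (fun a _ => σ a) (fun a ha => by rw [hf a ha, add_neg_cancel])
    (fun a ha hfa hσa => hfa (self_eq_neg.mp (by simpa [hσa] using hf a ha))) hσ hσσ

theorem Nat.mul_mod_mul_mod_eq_self {n u b : ℕ} (hu : u ^ 2 ≡ 1 [MOD n]) (hb : b < n) :
    b * u % n * u % n = b :=
  calc b * u % n * u % n = b * u ^ 2 % n := by rw [Nat.mod_mul_mod, mul_assoc, sq]
    _ = b * 1 % n := hu.mul_left b
    _ = b := by rw [mul_one, Nat.mod_eq_of_lt hb]

theorem kron12_eq_neg_of_modEq {x y : ℤ} (h : y ≡ 7 * x [ZMOD 12]) : kron12 y = -kron12 x := by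
  unfold Int.ModEq at h
  unfold kron12
  split_ifs <;> omega

theorem kron_eq_jacobiSym_natAbs {d : ℤ} (hd : d < 0) (hd8 : d ≡ 1 [ZMOD 8]) {n : ℕ}
    (hn : n ≠ 0) : kron d n = J(n | d.natAbs) := by
  set A := d.natAbs
  have hAd : (A : ℤ) = -d := Int.ofNat_natAbs_of_nonpos hd.le
  have hA8 : A % 8 = 7 := by unfold Int.ModEq at hd8; omega
  have hA : Odd A := Nat.odd_iff.mpr (by omega)
  set k := n / 2 ^ n.factorization 2
  have hnk : 2 ^ n.factorization 2 * k = n := Nat.ordProj_mul_ordCompl_eq_self n 2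
  have hk : Odd k :=
    Nat.odd_iff.mpr (Nat.two_dvd_ne_zero.mp (Nat.not_dvd_ordCompl Nat.prime_two hn))
  have hkA : kron d n = J(k | A) := by
    rw [kron, show d = -(A : ℤ) by omega, jacobiSym.neg _ hk]
    rcases Nat.odd_mod_four_iff.mp (Nat.odd_iff.mp hk) with h4 | h4
    · rw [ZMod.χ₄_nat_one_mod_four h4, one_mul,
        jacobiSym.quadratic_reciprocity_one_mod_four' hA h4]
    · rw [ZMod.χ₄_nat_three_mod_four h4,
        jacobiSym.quadratic_reciprocity_three_mod_four (by omega) h4, neg_one_mul, neg_neg]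
  rw [hkA, ← hnk, Nat.cast_mul, Nat.cast_pow, jacobiSym.mul_left, jacobiSym.pow_left,
    Nat.cast_ofNat, jacobiSym.at_two hA, ZMod.χ₈_nat_eq_if_mod_eight]
  simp [hA8, Nat.odd_iff.mp hA]

theorem exists_sq_modEq_one_and_modEq_seven {n : ℕ} (hn : n ≠ 0) (h24 : 24 ∣ n) :
    ∃ u : ℕ, (u : ℤ) ^ 2 ≡ 1 [ZMOD n] ∧ (u : ℤ) ≡ 7 [ZMOD 12] := by
  obtain ⟨k, m, hm, rfl⟩ := Nat.exists_eq_two_pow_mul_odd hn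
  have hcop : (2 ^ k).Coprime m := Nat.Coprime.pow_left k (Nat.coprime_two_left.mpr hm)
  obtain ⟨u, hu₁, hu₂⟩ := Nat.chineseRemainder hcop (2 ^ k - 1) 1
  have hplus : (2 ^ k : ℤ) ∣ u + 1 := by
    have : u + 1 ≡ 0 [MOD 2 ^ k] := (hu₁.add_right 1).trans <| by
      rw [Nat.sub_add_cancel Nat.one_le_two_pow]; exact Nat.modEq_zero_iff_dvd.mpr dvd_rfl
    exact_mod_cast Nat.modEq_zero_iff_dvd.mp this
  have hminus : (m : ℤ) ∣ u - 1 := by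
    simpa using (Int.natCast_modEq_iff.mpr hu₂).symm.dvd
  have h4 : (4 : ℤ) ∣ 2 ^ k := by
    have : 2 ^ 2 ∣ 2 ^ k := Nat.Coprime.dvd_of_dvd_mul_right
      (Nat.Coprime.pow_left 2 (Nat.coprime_two_left.mpr hm))
      ((by norm_num : 2 ^ 2 ∣ 24).trans h24)
    exact_mod_cast this
  have h3 : (3 : ℤ) ∣ m := by
    have : 3 ∣ m := Nat.Coprime.dvd_of_dvd_mul_left
      (Nat.Coprime.pow_right k (by norm_num : Nat.Coprime 3 2))
      ((by norm_num : 3 ∣ 24).trans h24)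
    exact_mod_cast this
  refine ⟨u, (Int.modEq_iff_dvd.mpr ?_).symm, ?_⟩
  · push_cast
    rw [show (u : ℤ) ^ 2 - 1 = (u + 1) * (u - 1) by ring]
    exact mul_dvd_mul hplus hminus
  · have := h4.trans hplus
    have := h3.trans hminus
    unfold Int.ModEq
    omega

theorem exists_modEq_one_and_pos {a b ℓ : ℤ} {h : ℕ} (ha : 0 < a) (hh : 0 < h)
    (hcop : IsCoprime (2 * a) h) :
    ∃ x, 2 * a * x + b ≡ 1 [ZMOD h] ∧ 0 < a * x ^ 2 + b * x + ℓ := by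
  obtain ⟨s, t, hst⟩ := hcop
  set x₀ := s * (1 - b)
  set k := |2 * a * x₀ + b| + |b ^ 2 - 4 * a * ℓ| + 1
  refine ⟨x₀ + h * k,
    Int.modEq_iff_dvd.mpr ⟨t * (1 - b) - 2 * a * k, by linear_combination (b - 1) * hst⟩, ?_⟩
  have hk : 0 ≤ k := by positivity
  have hβ : |b ^ 2 - 4 * a * ℓ| + 1 ≤ 2 * a * (x₀ + h * k) + b := by
    have h1 : (1 : ℤ) ≤ h := by exact_mod_cast hh
    have : k ≤ 2 * a * h * k := le_mul_of_one_le_left hk (by nlinarith)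
    linarith [neg_abs_le (2 * a * x₀ + b)]
  nlinarith [le_abs_self (b ^ 2 - 4 * a * ℓ), abs_nonneg (b ^ 2 - 4 * a * ℓ)]

theorem sq_sub_sq_dvd_of_modEq {c g u x y : ℤ} (hgx : g ∣ x) (hgc : g ∣ c)
    (hu : u ^ 2 ≡ 1 [ZMOD 24 * c]) (hy : y ≡ x * u [ZMOD 12 * c]) :
    24 * c * g ∣ y ^ 2 - x ^ 2 := by
  obtain ⟨k, hk⟩ := hy.symm.dvd
  obtain ⟨w, hw⟩ := hu.symm.dvd
  obtain ⟨x₁, rfl⟩ := hgx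
  obtain ⟨c₁, rfl⟩ := hgc
  refine ⟨g * x₁ ^ 2 * w + k * x₁ * u + 6 * c₁ * k ^ 2, ?_⟩
  rw [show y = g * x₁ * u + 12 * (g * c₁) * k by linarith]
  linear_combination (g * x₁) ^ 2 * hw

theorem dvd_sq_sub_of_modEq {c u b y D : ℤ} (hu : u ^ 2 ≡ 1 [ZMOD 24 * c])
    (hb : 24 * c ∣ b ^ 2 - D) (hy : y ≡ b * u [ZMOD 12 * c]) : 24 * c ∣ y ^ 2 - D := by
  have := sq_sub_sq_dvd_of_modEq (one_dvd b) (one_dvd c) hu hy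
  rw [mul_one] at this
  simpa using this.add hb

theorem Squarefree.gcd_dvd_of_dvd_sq_sub {d D b n : ℤ} (hd : Squarefree d) (hdD : d ∣ D)
    (hn : n ∣ b ^ 2 - D) : (Int.gcd d n : ℤ) ∣ b := by
  have hg : (Int.gcd d n : ℤ) ∣ d := Int.gcd_dvd_left _ _
  refine ((hd.squarefree_of_dvd hg).dvd_pow_iff_dvd two_ne_zero).mp ?_
  simpa using dvd_add ((Int.gcd_dvd_right _ _).trans hn) (hg.trans hdD)

theorem Int.isCoprime_of_natAbs_eq_mul {x d : ℤ} {g h : ℕ} (hgh : d.natAbs = g * h)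
    (hg : IsCoprime x g) (hh : IsCoprime x h) : IsCoprime x d := by
  have := hg.mul_right hh
  rw [Int.isCoprime_iff_gcd_eq_one] at this ⊢
  rwa [Int.gcd, hgh]

structure IsGenusCharacter (d D : ℤ) (χ : ℤ × ℤ × ℤ → ℤ) : Prop where
  eq_zero : ∀ a b c : ℤ, b ^ 2 - 4 * a * c = D →
    1 < Int.gcd (Int.gcd (Int.gcd a b : ℤ) c : ℤ) d → χ (a, b, c) = 0
  eq_kron : ∀ a b c : ℤ, b ^ 2 - 4 * a * c = D →
    Int.gcd (Int.gcd (Int.gcd a b : ℤ) c : ℤ) d = 1 →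
    ∀ m : ℕ, 1 ≤ m → Int.gcd (m : ℤ) d = 1 →
      (∃ x y : ℤ, (m : ℤ) = a * x ^ 2 + b * x * y + c * y ^ 2) →
      χ (a, b, c) = kron d m

namespace IsGenusCharacter

variable {d D : ℤ} {χ : ℤ × ℤ × ℤ → ℤ}

theorem apply_eq_zero_of_dvd (hχ : IsGenusCharacter d D χ) (hd : d ≠ 0) {a b c : ℤ}
    (hdisc : b ^ 2 - 4 * a * c = D) {e : ℕ} (he : 1 < e) (ha : (e : ℤ) ∣ a)
    (hb : (e : ℤ) ∣ b) (hc : (e : ℤ) ∣ c) (hed : (e : ℤ) ∣ d) : χ (a, b, c) = 0 := by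
  refine hχ.eq_zero a b c hdisc
    (he.trans_le (Nat.le_of_dvd (Int.gcd_pos_of_ne_zero_right _ hd) ?_))
  exact Int.natCast_dvd_natCast.mp
    (Int.dvd_coe_gcd (Int.dvd_coe_gcd (Int.dvd_coe_gcd ha hb) hc) hed)

theorem apply_eq_jacobiSym_of_isCoprime (hχ : IsGenusCharacter d D χ) (hd : d < 0)
    (hd8 : d ≡ 1 [ZMOD 8]) (hdD : d ∣ D) {g h : ℕ} (hgh : d.natAbs = g * h) {a b ℓ : ℤ}
    (hdisc : b ^ 2 - 4 * a * ℓ = D) (ha : 0 < a) (hga : (g : ℤ) ∣ a) (hgb : (g : ℤ) ∣ b)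
    (hcop : IsCoprime (2 * a) h) (hℓg : IsCoprime ℓ g) :
    χ (a, b, ℓ) = J(ℓ | g) * J(4 * a | h) := by
  have hg : g ≠ 0 := by rintro rfl; omega
  have hh : h ≠ 0 := by rintro rfl; omega
  have hhD : (h : ℤ) ∣ D := (Int.natCast_dvd.mpr ⟨g, hgh.trans (mul_comm g h)⟩).trans hdD
  obtain ⟨x, hβ, hm⟩ :=
    exists_modEq_one_and_pos (b := b) (ℓ := ℓ) ha (Nat.pos_of_ne_zero hh) hcop
  set m := a * x ^ 2 + b * x + ℓ
  have hmℓ : m ≡ ℓ [ZMOD g] := by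
    refine (Int.modEq_iff_dvd.mpr ?_).symm
    rw [show m - ℓ = a * x ^ 2 + b * x by ring]
    exact dvd_add (hga.mul_right _) (hgb.mul_right _)
  have hm4a : 4 * a * m ≡ 1 [ZMOD h] := by
    rw [show 4 * a * m = (2 * a * x + b) ^ 2 - D by rw [← hdisc]; ring]
    simpa using (hβ.pow 2).sub (Int.modEq_zero_iff_dvd.mpr hhD)
  have hmg : IsCoprime m g := by
    obtain ⟨k, hk⟩ := hmℓ.symm.dvd
    rw [show m = ℓ + g * k by linarith]
    exact hℓg.add_mul_left_left k
  have hmh : IsCoprime m h := by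
    obtain ⟨k, hk⟩ := hm4a.symm.dvd
    exact ⟨4 * a, -k, by linarith⟩
  have hcontent : Int.gcd (Int.gcd (Int.gcd a b : ℤ) ℓ : ℤ) d = 1 := by
    rw [← Int.isCoprime_iff_gcd_eq_one]
    refine Int.isCoprime_of_natAbs_eq_mul hgh
      (hℓg.of_isCoprime_of_dvd_left (Int.gcd_dvd_right _ _)) (hcop.of_isCoprime_of_dvd_left ?_)
    exact ((Int.gcd_dvd_left _ _).trans (Int.gcd_dvd_left _ _)).mul_left 2
  have hm' : ((m.toNat : ℕ) : ℤ) = m := Int.toNat_of_nonneg hm.le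
  have hmd : Int.gcd (m.toNat : ℤ) d = 1 := by
    rw [hm', ← Int.isCoprime_iff_gcd_eq_one]
    exact Int.isCoprime_of_natAbs_eq_mul hgh hmg hmh
  rw [hχ.eq_kron a b ℓ hdisc hcontent m.toNat (by omega) hmd ⟨x, 1, by rw [hm']; ring⟩,
    kron_eq_jacobiSym_natAbs hd hd8 (by omega), hgh, jacobiSym.mul_right' _ hg hh, hm']
  congr 1
  · exact jacobiSym.mod_left' hmℓ
  · have hprod : J(4 * a | h) * J(m | h) = 1 := by
      rw [← jacobiSym.mul_left, jacobiSym.mod_left' hm4a, jacobiSym.one_left]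
    rcases Int.mul_eq_one_iff_eq_one_or_neg_one.mp hprod with ⟨h₁, h₂⟩ | ⟨h₁, h₂⟩ <;>
      rw [h₁, h₂]

theorem apply_eq_jacobiSym (hχ : IsGenusCharacter d D χ) (hd : d < 0) (hd8 : d ≡ 1 [ZMOD 8])
    (hdD : d ∣ D) {g h : ℕ} (hgh : d.natAbs = g * h) {a b ℓ : ℤ}
    (hdisc : b ^ 2 - 4 * a * ℓ = D) (ha : 0 < a) (hga : (g : ℤ) ∣ a) (hgb : (g : ℤ) ∣ b)
    (hcop : IsCoprime (2 * a) h) :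
    χ (a, b, ℓ) = J(ℓ | g) * J(4 * a | h) := by
  by_cases hℓg : Int.gcd ℓ g = 1
  · exact hχ.apply_eq_jacobiSym_of_isCoprime hd hd8 hdD hgh hdisc ha hga hgb hcop
      (Int.isCoprime_iff_gcd_eq_one.mpr hℓg)
  -- a common factor of `ℓ` and `g` divides the content of the form
  have hg : g ≠ 0 := by rintro rfl; omega
  have : NeZero g := ⟨hg⟩
  rw [jacobiSym.eq_zero_iff_not_coprime.mpr hℓg, zero_mul]
  have hpos : 0 < Int.gcd ℓ g := Int.gcd_pos_of_ne_zero_right _ (by exact_mod_cast hg)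
  have hdvd : ((Int.gcd ℓ g : ℕ) : ℤ) ∣ g := Int.gcd_dvd_right _ _
  exact hχ.apply_eq_zero_of_dvd hd.ne hdisc (by omega) (hdvd.trans hga) (hdvd.trans hgb)
    (Int.gcd_dvd_left _ _) (hdvd.trans (Int.natCast_dvd.mpr ⟨h, hgh⟩))

variable (hd : d < 0) (hd24 : d ≡ 1 [ZMOD 24]) (hsf : Squarefree d) (hdD : d ∣ D)
include hd hd24 hsf hdD

theorem apply_six_mul_eq_jacobiSym (hχ : IsGenusCharacter d D χ) {c : ℕ} (hc : c ≠ 0) {b : ℤ}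
    (hb : 24 * (c : ℤ) ∣ b ^ 2 - D) :
    χ (6 * c, b, (b ^ 2 - D) / (24 * c)) =
      J((b ^ 2 - D) / (24 * c) | Int.gcd d c) * J(24 * c | d.natAbs / Int.gcd d c) := by
  set g := Int.gcd d c
  set h := d.natAbs / g
  have hgh : d.natAbs = g * h := (Nat.mul_div_cancel' (Nat.gcd_dvd_left _ _)).symm
  have hgc : (g : ℤ) ∣ c := Int.gcd_dvd_right _ _
  have hgb : (g : ℤ) ∣ b := hsf.gcd_dvd_of_dvd_sq_sub hdD ((dvd_mul_left _ _).trans hb)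
  have hcop : IsCoprime (2 * (6 * c : ℤ)) h := by
    rw [← mul_assoc]
    refine IsCoprime.mul_left ?_ (Nat.isCoprime_iff_coprime.mpr
      (Nat.coprime_div_gcd_of_squarefree (Int.squarefree_natAbs.mpr hsf) hc).symm)
    obtain ⟨k, hk⟩ := hd24.symm.dvd
    have h12d : IsCoprime (12 : ℤ) d := ⟨-2 * k, 1, by linarith⟩
    exact h12d.of_isCoprime_of_dvd_right
      (Int.natCast_dvd.mpr (Nat.div_dvd_of_dvd (Nat.gcd_dvd_left _ _)))
  have hdisc : b ^ 2 - 4 * (6 * c) * ((b ^ 2 - D) / (24 * c)) = D := by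
    rw [show 4 * (6 * (c : ℤ)) = 24 * c by ring, Int.mul_ediv_cancel' hb]; ring
  rw [hχ.apply_eq_jacobiSym hd (hd24.of_mul_left 3) hdD hgh hdisc (by positivity)
    (hgc.mul_left 6) hgb hcop, show 4 * (6 * (c : ℤ)) = 24 * c by ring]

theorem apply_six_mul_eq_of_modEq (hχ : IsGenusCharacter d D χ) {c : ℕ} (hc : c ≠ 0)
    {u b y : ℤ} (hu : u ^ 2 ≡ 1 [ZMOD 24 * c]) (hb : 24 * (c : ℤ) ∣ b ^ 2 - D)
    (hy : y ≡ b * u [ZMOD 12 * c]) :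
    χ (6 * c, y, (y ^ 2 - D) / (24 * c)) = χ (6 * c, b, (b ^ 2 - D) / (24 * c)) := by
  have hy' := dvd_sq_sub_of_modEq hu hb hy
  have hyb := sq_sub_sq_dvd_of_modEq
    (hsf.gcd_dvd_of_dvd_sq_sub hdD ((dvd_mul_left _ _).trans hb)) (Int.gcd_dvd_right _ _) hu hy
  rw [hχ.apply_six_mul_eq_jacobiSym hd hd24 hsf hdD hc hb,
    hχ.apply_six_mul_eq_jacobiSym hd hd24 hsf hdD hc hy']
  congr 1
  refine jacobiSym.mod_left' (Int.ModEq.symm (Int.modEq_iff_dvd.mpr ?_))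
  refine Int.dvd_of_mul_dvd_mul_left (a := 24 * c) (by positivity) ?_
  rwa [mul_sub, Int.mul_ediv_cancel' hb, Int.mul_ediv_cancel' hy', sub_sub_sub_cancel_right]

end IsGenusCharacter

theorem genus_character_sum_vanishes_general (D d d' : ℤ)
    (hdneg : d < 0)
    (hd24 : d ≡ 1 [ZMOD 24])
    (hsf : Squarefree d) (hfac : D = d * d')
    (χ : ℤ × ℤ × ℤ → ℤ)
    (hχ0 : ∀ a b c : ℤ, b ^ 2 - 4 * a * c = D →
      1 < Int.gcd (Int.gcd (Int.gcd a b : ℤ) c : ℤ) d → χ (a, b, c) = 0)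
    (hχ1 : ∀ a b c : ℤ, b ^ 2 - 4 * a * c = D →
      Int.gcd (Int.gcd (Int.gcd a b : ℤ) c : ℤ) d = 1 →
      ∀ m : ℕ, 1 ≤ m → Int.gcd (m : ℤ) d = 1 →
        (∃ x y : ℤ, (m : ℤ) = a * x ^ 2 + b * x * y + c * y ^ 2) →
        χ (a, b, c) = kron d m) :
    ∀ c : ℕ, 1 ≤ c →
      ∑ b ∈ (Finset.range (12 * c)).filter
          (fun b : ℕ => ((b : ℤ) ^ 2 - D) % (24 * (c : ℤ)) = 0),
        kron12 (b : ℤ) * χ (6 * (c : ℤ), (b : ℤ), ((b : ℤ) ^ 2 - D) / (24 * (c : ℤ))) = 0 := by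
  intro c hc
  have hχ : IsGenusCharacter d D χ := ⟨hχ0, hχ1⟩
  obtain ⟨u, hu, hu7⟩ := exists_sq_modEq_one_and_modEq_seven (n := 24 * c) (by omega)
    (dvd_mul_right _ _)
  push_cast at hu
  have hσ (b : ℕ) : ((b * u % (12 * c) : ℕ) : ℤ) ≡ b * u [ZMOD 12 * c] := by
    push_cast; exact Int.mod_modEq _ _
  simp only [← Int.dvd_iff_emod_eq_zero]
  refine Finset.sum_eq_zero_of_involution_neg (fun b => b * u % (12 * c)) (fun b hb => ?_)
    (fun b hb => ?_) (fun b hb => ?_) <;> simp only [Finset.mem_filter, Finset.mem_range] at hb ⊢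
  · exact ⟨Nat.mod_lt _ (by omega), dvd_sq_sub_of_modEq hu hb.2 (hσ b)⟩
  · refine Nat.mul_mod_mul_mod_eq_self (Int.natCast_modEq_iff.mp ?_) hb.1
    push_cast
    exact hu.of_dvd ⟨2, by ring⟩
  · have h7 : ((b * u % (12 * c) : ℕ) : ℤ) ≡ 7 * b [ZMOD 12] :=
      ((hσ b).of_mul_right c).trans (by rw [mul_comm 7]; exact hu7.mul_left b)
    rw [hχ.apply_six_mul_eq_of_modEq hdneg hd24 hsf ⟨d', hfac⟩ (by omega) hu hb.2 (hσ b),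
      kron12_eq_neg_of_modEq h7, neg_mul]

theorem genus_character_sum_vanishes (D d d' : ℤ)
    (hD : 0 < D) (hD24 : D ≡ 1 [ZMOD 24])
    (hdneg : d < 0) (hd'neg : d' < 0)
    (hd24 : d ≡ 1 [ZMOD 24]) (hd'24 : d' ≡ 1 [ZMOD 24])
    (hsf : Squarefree d) (hfac : D = d * d')
    (χ : ℤ × ℤ × ℤ → ℤ)
    (hχ0 : ∀ a b c : ℤ, b ^ 2 - 4 * a * c = D →
      1 < Int.gcd (Int.gcd (Int.gcd a b : ℤ) c : ℤ) d → χ (a, b, c) = 0)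
    (hχ1 : ∀ a b c : ℤ, b ^ 2 - 4 * a * c = D →
      Int.gcd (Int.gcd (Int.gcd a b : ℤ) c : ℤ) d = 1 →
      ∀ m : ℕ, 1 ≤ m → Int.gcd (m : ℤ) d = 1 →
        (∃ x y : ℤ, (m : ℤ) = a * x ^ 2 + b * x * y + c * y ^ 2) →
        χ (a, b, c) = kron d m) :
    ∀ c : ℕ, 1 ≤ c →
      ∑ b ∈ (Finset.range (12 * c)).filter
          (fun b : ℕ => ((b : ℤ) ^ 2 - D) % (24 * (c : ℤ)) = 0),
        kron12 (b : ℤ) * χ (6 * (c : ℤ), (b : ℤ), ((b : ℤ) ^ 2 - D) / (24 * (c : ℤ))) = 0 :=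
  genus_character_sum_vanishes_general D d d' hdneg hd24 hsf hfac χ hχ0 hχ1
end
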